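/- arXiv:1905.03831 — 2 statements merged into one kernel-verified Lean document; each statement's English description precedes it below -/
import Mathlib

section
/- Let L be a self-adjoint real matrix and let (Uⁿ) be vectors satisfying the recurrence Φ ∘ (Uⁿ⁺¹ − 2Uⁿ + Uⁿ⁻¹) = LUⁿ, where Φ ∘ denotes multiplication by a fixed positive diagonal matrix D (entries Φᵢ > 0). Define Γⁿ = Uⁿ − Uⁿ⁻¹ and Rⁿ = ⟨DΓⁿ, Γⁿ⟩ + (1/4)⟨LΓⁿ, Γⁿ⟩ − (1/4)⟨L(Uⁿ + Uⁿ⁻¹), Uⁿ + Uⁿ⁻¹⟩. Then Rⁿ⁺¹ = Rⁿ for all n ≥ 1. -/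
/-!
Writing `u, v, w` for three consecutive iterates, the symmetry of `L` turns the energy into
`⟨D(v - u), v - u⟩ - ⟨Lv, u⟩` by polarization. The change of the kinetic part from one step to the
next is then a difference of squares, `⟨D(w - 2v + u), w - u⟩ = ⟨Lv, w - u⟩` by the recurrence, which
is exactly the change `⟨Lw, v⟩ - ⟨Lv, u⟩` of the potential part.
-/

open Matrix

namespace Matrix.IsSymm

variable {ι K : Type*} [Fintype ι] [CommRing K] {M : Matrix ι ι K}

theorem mulVec_dotProduct_comm (hM : M.IsSymm) (x y : ι → K) :
    (M *ᵥ x) ⬝ᵥ y = (M *ᵥ y) ⬝ᵥ x := by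
  rw [dotProduct_comm, dotProduct_mulVec, ← mulVec_transpose, hM.eq, dotProduct_comm]

theorem mulVec_sub_dotProduct_sub_sub_mulVec_add_dotProduct_add (hM : M.IsSymm) (x y : ι → K) :
    (M *ᵥ (x - y)) ⬝ᵥ (x - y) - (M *ᵥ (x + y)) ⬝ᵥ (x + y) = -4 * ((M *ᵥ x) ⬝ᵥ y) := by
  simp only [mulVec_add, mulVec_sub, add_dotProduct, sub_dotProduct, dotProduct_add,
    dotProduct_sub, hM.mulVec_dotProduct_comm y x]
  ring

theorem mulVec_dotProduct_self_sub (hM : M.IsSymm) (x y : ι → K) :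
    (M *ᵥ x) ⬝ᵥ x - (M *ᵥ y) ⬝ᵥ y = (M *ᵥ (x - y)) ⬝ᵥ (x + y) := by
  simp only [mulVec_sub, sub_dotProduct, dotProduct_add, hM.mulVec_dotProduct_comm y x]
  ring

end Matrix.IsSymm

section DiscreteEnergy

variable {ι K : Type*} [Fintype ι] [Field K] [CharZero K] {D L : Matrix ι ι K}

/-- The energy `Rⁿ` of the scheme `D (Uⁿ⁺¹ - 2Uⁿ + Uⁿ⁻¹) = L Uⁿ` at `Uⁿ⁻¹ = u`, `Uⁿ = v`. -/
def discreteEnergy (D L : Matrix ι ι K) (u v : ι → K) : K :=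
  (D *ᵥ (v - u)) ⬝ᵥ (v - u) + (1 / 4) * ((L *ᵥ (v - u)) ⬝ᵥ (v - u))
    - (1 / 4) * ((L *ᵥ (v + u)) ⬝ᵥ (v + u))

theorem discreteEnergy_eq (hL : L.IsSymm) (u v : ι → K) :
    discreteEnergy D L u v = (D *ᵥ (v - u)) ⬝ᵥ (v - u) - (L *ᵥ v) ⬝ᵥ u := by
  have hpolar := hL.mulVec_sub_dotProduct_sub_sub_mulVec_add_dotProduct_add v u
  rw [discreteEnergy]
  linear_combination (1 / 4 : K) * hpolar

theorem discreteEnergy_eq_of_step (hD : D.IsSymm) (hL : L.IsSymm) {u v w : ι → K}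
    (hstep : D *ᵥ (w - 2 • v + u) = L *ᵥ v) :
    discreteEnergy D L v w = discreteEnergy D L u v := by
  have hkinetic : (D *ᵥ (w - v)) ⬝ᵥ (w - v) - (D *ᵥ (v - u)) ⬝ᵥ (v - u)
      = (L *ᵥ v) ⬝ᵥ (w - u) := by
    rw [hD.mulVec_dotProduct_self_sub, ← hstep]
    congr 2 <;> module
  rw [dotProduct_sub (L *ᵥ v)] at hkinetic
  rw [discreteEnergy_eq hL, discreteEnergy_eq hL, hL.mulVec_dotProduct_comm w v]
  linear_combination hkinetic

end DiscreteEnergy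

theorem discrete_energy_conserved_general {n : ℕ} (L : Matrix (Fin n) (Fin n) ℝ)
    (hL : L.IsSymm) (d : Fin n → ℝ)
    (U : ℕ → (Fin n → ℝ))
    (hrec : ∀ k, 1 ≤ k →
      (Matrix.diagonal d) *ᵥ (U (k + 1) - 2 • U k + U (k - 1)) = L *ᵥ U k)
    (Γ : ℕ → (Fin n → ℝ)) (hΓ : ∀ k, 1 ≤ k → Γ k = U k - U (k - 1))
    (R : ℕ → ℝ)
    (hR : ∀ k, 1 ≤ k → R k =
      ((Matrix.diagonal d) *ᵥ Γ k) ⬝ᵥ Γ k + (1/4) * ((L *ᵥ Γ k) ⬝ᵥ Γ k)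
        - (1/4) * ((L *ᵥ (U k + U (k - 1))) ⬝ᵥ (U k + U (k - 1)))) :
    ∀ k, 1 ≤ k → R (k + 1) = R k := by
  have hR_energy : ∀ k, 1 ≤ k → R k = discreteEnergy (diagonal d) L (U (k - 1)) (U k) := by
    intro k hk
    rw [hR k hk, hΓ k hk, discreteEnergy]
  intro k hk
  rw [hR_energy (k + 1) (by omega), hR_energy k hk, Nat.add_sub_cancel]
  exact discreteEnergy_eq_of_step (isSymm_diagonal d) hL (hrec k hk)

theorem discrete_energy_conserved {n : ℕ} (L : Matrix (Fin n) (Fin n) ℝ)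
    (hL : L.IsSymm) (d : Fin n → ℝ) (hd : ∀ i, 0 < d i)
    (U : ℕ → (Fin n → ℝ))
    (hrec : ∀ k, 1 ≤ k →
      (Matrix.diagonal d) *ᵥ (U (k + 1) - 2 • U k + U (k - 1)) = L *ᵥ U k)
    (Γ : ℕ → (Fin n → ℝ)) (hΓ : ∀ k, 1 ≤ k → Γ k = U k - U (k - 1))
    (R : ℕ → ℝ)
    (hR : ∀ k, 1 ≤ k → R k =
      ((Matrix.diagonal d) *ᵥ Γ k) ⬝ᵥ Γ k + (1/4) * ((L *ᵥ Γ k) ⬝ᵥ Γ k)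
        - (1/4) * ((L *ᵥ (U k + U (k - 1))) ⬝ᵥ (U k + U (k - 1)))) :
    ∀ k, 1 ≤ k → R (k + 1) = R k :=
  discrete_energy_conserved_general L hL d U hrec Γ hΓ R hR
end

section
/- Under the hypotheses of the discrete energy conservation (D positive diagonal with min entry Φ_min, L symmetric with eigenvalues in [−M, −m], 0 < m ≤ M), if Φ_min > M/4 then the conserved quantity Rⁿ = ⟨DΓⁿ, Γⁿ⟩ + (1/4)⟨LΓⁿ, Γⁿ⟩ − (1/4)⟨L(Uⁿ+Uⁿ⁻¹), Uⁿ+Uⁿ⁻¹⟩ satisfies (Φ_min − M/4)‖Γⁿ‖² + (m/4)‖Uⁿ+Uⁿ⁻¹‖² ≤ Rⁿ ≤ (Φ_max − m/4)‖Γⁿ‖² + (M/4)‖Uⁿ+Uⁿ⁻¹‖², so Rⁿ is equivalent (up to positive constants) to the energy ‖Uⁿ‖² + ‖Uⁿ⁻¹‖². -/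
/-!
Each of the three quadratic forms making up `R` is squeezed between the extreme points of the
spectrum of its matrix: `Φmin ≤ D ≤ Φmax` and `-M ≤ L ≤ -m` in the Loewner order, the diagonal
matrix having its entries as spectrum. Adding the resulting bounds, with the sign of the
`U + V` term reversed, gives both inequalities.
-/

open Matrix
open scoped MatrixOrder ComplexOrder

namespace Matrix

variable {ι : Type*} [Fintype ι]

theorem dotProduct_mulVec_le_of_le {𝕜 : Type*} [RCLike 𝕜] {A B : Matrix ι ι 𝕜} (hAB : A ≤ B)
    (x : ι → 𝕜) : star x ⬝ᵥ A *ᵥ x ≤ star x ⬝ᵥ B *ᵥ x := by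
  have hpsd := (le_iff.mp hAB).dotProduct_mulVec_nonneg x
  rwa [sub_mulVec, dotProduct_sub, sub_nonneg] at hpsd

variable [DecidableEq ι] {A : Matrix ι ι ℝ}

theorem dotProduct_algebraMap_mulVec (c : ℝ) (x : ι → ℝ) :
    x ⬝ᵥ algebraMap ℝ (Matrix ι ι ℝ) c *ᵥ x = c * (x ⬝ᵥ x) := by
  rw [Algebra.algebraMap_eq_smul_one, smul_mulVec, one_mulVec, dotProduct_smul, smul_eq_mul]

theorem IsHermitian.le_mulVec_dotProduct_of_le_spectrum (hA : A.IsHermitian) {a : ℝ}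
    (h : ∀ μ ∈ spectrum ℝ A, a ≤ μ) (x : ι → ℝ) : a * (x ⬝ᵥ x) ≤ A *ᵥ x ⬝ᵥ x := by
  have := dotProduct_mulVec_le_of_le (algebraMap_le_of_le_spectrum h hA) x
  rwa [star_trivial, dotProduct_algebraMap_mulVec, dotProduct_comm x (A *ᵥ x)] at this

theorem IsHermitian.mulVec_dotProduct_le_of_spectrum_le (hA : A.IsHermitian) {b : ℝ}
    (h : ∀ μ ∈ spectrum ℝ A, μ ≤ b) (x : ι → ℝ) : A *ᵥ x ⬝ᵥ x ≤ b * (x ⬝ᵥ x) := by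
  have := dotProduct_mulVec_le_of_le (le_algebraMap_of_spectrum_le h hA) x
  rwa [star_trivial, dotProduct_algebraMap_mulVec, dotProduct_comm x (A *ᵥ x)] at this

end Matrix

theorem energy_equivalence_general {n : ℕ} (L : Matrix (Fin n) (Fin n) ℝ) (hL : L.IsSymm)
    (m M : ℝ)
    (hspec : ∀ μ ∈ spectrum ℝ L, -M ≤ μ ∧ μ ≤ -m)
    (d : Fin n → ℝ) (Φmin Φmax : ℝ)
    (hd : ∀ i, Φmin ≤ d i ∧ d i ≤ Φmax)
    (U V : Fin n → ℝ) (Γ : Fin n → ℝ) (R : ℝ)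
    (hR : R = ((Matrix.diagonal d) *ᵥ Γ) ⬝ᵥ Γ + (1/4) * ((L *ᵥ Γ) ⬝ᵥ Γ)
            - (1/4) * ((L *ᵥ (U + V)) ⬝ᵥ (U + V))) :
    (Φmin - M / 4) * (Γ ⬝ᵥ Γ) + (m / 4) * ((U + V) ⬝ᵥ (U + V)) ≤ R ∧
    R ≤ (Φmax - m / 4) * (Γ ⬝ᵥ Γ) + (M / 4) * ((U + V) ⬝ᵥ (U + V)) := by
  have hLH : L.IsHermitian := isHermitian_iff_isSymm.mpr hL
  have hDH : (diagonal d).IsHermitian := isHermitian_diagonal d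
  have hL_ge x := hLH.le_mulVec_dotProduct_of_le_spectrum (fun μ hμ ↦ (hspec μ hμ).1) x
  have hL_le x := hLH.mulVec_dotProduct_le_of_spectrum_le (fun μ hμ ↦ (hspec μ hμ).2) x
  have hD_ge := hDH.le_mulVec_dotProduct_of_le_spectrum (a := Φmin)
    (by rw [spectrum_diagonal]; rintro _ ⟨i, rfl⟩; exact (hd i).1) Γ
  have hD_le := hDH.mulVec_dotProduct_le_of_spectrum_le (b := Φmax)
    (by rw [spectrum_diagonal]; rintro _ ⟨i, rfl⟩; exact (hd i).2) Γ
  subst hR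
  constructor
  · linear_combination hD_ge + hL_ge Γ / 4 + hL_le (U + V) / 4
  · linear_combination hD_le + hL_le Γ / 4 + hL_ge (U + V) / 4

theorem energy_equivalence {n : ℕ} (L : Matrix (Fin n) (Fin n) ℝ) (hL : L.IsSymm)
    (m M : ℝ) (hm : 0 < m) (hmM : m ≤ M)
    (hspec : ∀ μ ∈ spectrum ℝ L, -M ≤ μ ∧ μ ≤ -m)
    (d : Fin n → ℝ) (Φmin Φmax : ℝ)
    (hd : ∀ i, Φmin ≤ d i ∧ d i ≤ Φmax)
    (hΦ : M / 4 < Φmin)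
    (U V : Fin n → ℝ) (Γ : Fin n → ℝ) (hΓ : Γ = U - V) (R : ℝ)
    (hR : R = ((Matrix.diagonal d) *ᵥ Γ) ⬝ᵥ Γ + (1/4) * ((L *ᵥ Γ) ⬝ᵥ Γ)
            - (1/4) * ((L *ᵥ (U + V)) ⬝ᵥ (U + V))) :
    (Φmin - M / 4) * (Γ ⬝ᵥ Γ) + (m / 4) * ((U + V) ⬝ᵥ (U + V)) ≤ R ∧
    R ≤ (Φmax - m / 4) * (Γ ⬝ᵥ Γ) + (M / 4) * ((U + V) ⬝ᵥ (U + V)) :=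
  energy_equivalence_general L hL m M hspec d Φmin Φmax hd U V Γ R hR
end
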